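/- arXiv:quant-ph/0505091 — 2 statements merged into one kernel-verified Lean document; each statement's English description precedes it below -/
import Mathlib

section
/- For every three-qubit pure state ψ, the matrices R(ρ_AB) and R(ρ_AS) each have at most two nonzero eigenvalues (λ₃ = λ₄ = 0), and C_a(ρ_AB)² + C_a(ρ_AS)² − 4·det ρ_A = 2(λ₁^{AB} λ₂^{AB} + λ₁^{AS} λ₂^{AS}), where λ₁^{AB} ≥ λ₂^{AB} and λ₁^{AS} ≥ λ₂^{AS} are the two largest eigenvalues of R(ρ_AB) and R(ρ_AS) respectively. -/
open Matrix Complex Kronecker Finset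
open scoped ComplexOrder

noncomputable section

abbrev TwoQubitMat := Matrix (Fin 2 × Fin 2) (Fin 2 × Fin 2) ℂ

def sigmaY : Matrix (Fin 2) (Fin 2) ℂ := !![0, -Complex.I; Complex.I, 0]

def spinFlip (ρ : TwoQubitMat) : TwoQubitMat :=
  (sigmaY ⊗ₖ sigmaY) * ρ.map (starRingEnd ℂ) * (sigmaY ⊗ₖ sigmaY)

def matSqrt {m : Type*} [Fintype m] [DecidableEq m] (M : Matrix m m ℂ) : Matrix m m ℂ :=
  open scoped Classical in
  if h : M.PosSemidef then (h.1.eigenvectorUnitary : Matrix m m ℂ) *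
    diagonal ((↑) ∘ Real.sqrt ∘ h.1.eigenvalues) * (star h.1.eigenvectorUnitary : Matrix m m ℂ) else 0

def Rmat (ρ : TwoQubitMat) : TwoQubitMat :=
  matSqrt (matSqrt ρ * spinFlip ρ * matSqrt ρ)

def CoA (ρ : TwoQubitMat) : ℝ := (Rmat ρ).trace.re

def lmin2 (M : Matrix (Fin 2) (Fin 2) ℂ) : ℝ :=
  if h : M.IsHermitian then min (h.eigenvalues 0) (h.eigenvalues 1) else 0

def maxEig4 (M : TwoQubitMat) : ℝ :=
  if h : M.IsHermitian then Finset.univ.sup' Finset.univ_nonempty h.eigenvalues else 0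

def Conc (ρ : TwoQubitMat) : ℝ := max 0 (2 * maxEig4 (Rmat ρ) - (Rmat ρ).trace.re)

def eigMultiset (M : TwoQubitMat) : Multiset ℝ :=
  if h : M.IsHermitian then Finset.univ.val.map h.eigenvalues else 0

def rhoAB (ψ : Fin 2 → Fin 2 → Fin 2 → ℂ) : TwoQubitMat :=
  fun p q => ∑ l, ψ p.1 p.2 l * (starRingEnd ℂ) (ψ q.1 q.2 l)

def rhoAS (ψ : Fin 2 → Fin 2 → Fin 2 → ℂ) : TwoQubitMat :=
  fun p q => ∑ j, ψ p.1 j p.2 * (starRingEnd ℂ) (ψ q.1 j q.2)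

def rhoA (ψ : Fin 2 → Fin 2 → Fin 2 → ℂ) : Matrix (Fin 2) (Fin 2) ℂ :=
  fun i i' => ∑ j, ∑ l, ψ i j l * (starRingEnd ℂ) (ψ i' j l)

/-! The states ρ_AB and ρ_AS are reduced states of a pure state of three qubits, so each is
`M * Mᴴ` with `M` a 4 × 2 matrix and has rank at most 2. Since `R(ρ)² = √ρ ρ̃ √ρ`, also
`rank R(ρ) ≤ rank ρ ≤ 2`, and as `R(ρ) ⪰ 0` its spectrum is `{λ₁, λ₂, 0, 0}` with `λ₁ ≥ λ₂ ≥ 0`.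
Hence `C_a(ρ)² = (λ₁ + λ₂)² = Tr R(ρ)² + 2 λ₁ λ₂` and `Tr R(ρ)² = Tr (ρ ρ̃)` by cyclicity.
Finally `Tr (ρ_AB ρ̃_AB) + Tr (ρ_AS ρ̃_AS) = 4 det ρ_A` is a polynomial identity in the
amplitudes of `ψ`. -/

section MatSqrt

variable {m : Type*} [Fintype m] [DecidableEq m] {M : Matrix m m ℂ}

lemma matSqrt_eq_conjStarAlgAut (hM : M.PosSemidef) :
    matSqrt M = Unitary.conjStarAlgAut ℂ _ hM.1.eigenvectorUnitary
      (diagonal ((↑) ∘ Real.sqrt ∘ hM.1.eigenvalues)) := by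
  rw [matSqrt, dif_pos hM, Unitary.conjStarAlgAut_apply]

lemma posSemidef_matSqrt (hM : M.PosSemidef) : (matSqrt M).PosSemidef := by
  rw [matSqrt_eq_conjStarAlgAut hM, Unitary.conjStarAlgAut_apply, star_eq_conjTranspose]
  refine (posSemidef_diagonal_iff.mpr fun i => ?_).mul_mul_conjTranspose_same _
  exact Complex.zero_le_real.mpr (Real.sqrt_nonneg _)

lemma matSqrt_mul_self (hM : M.PosSemidef) : matSqrt M * matSqrt M = M := by
  conv_rhs => rw [hM.1.spectral_theorem]
  rw [matSqrt_eq_conjStarAlgAut hM, ← map_mul, diagonal_mul_diagonal]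
  congr 2
  funext i
  simp [← Complex.ofReal_mul, Real.mul_self_sqrt (hM.eigenvalues_nonneg i)]

lemma rank_matSqrt (hM : M.PosSemidef) : (matSqrt M).rank = M.rank := by
  rw [← rank_conjTranspose_mul_self, (posSemidef_matSqrt hM).1.eq, matSqrt_mul_self hM]

end MatSqrt

lemma Matrix.IsHermitian.trace_mul_self {n 𝕜 : Type*} [Fintype n] [DecidableEq n] [RCLike 𝕜]
    {A : Matrix n n 𝕜} (hA : A.IsHermitian) :
    (A * A).trace = ∑ i, (hA.eigenvalues i : 𝕜) ^ 2 := by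
  conv_lhs => rw [hA.spectral_theorem, ← map_mul, Unitary.conjStarAlgAut_apply, trace_mul_cycle,
    Unitary.coe_star_mul_self, one_mul, diagonal_mul_diagonal, trace_diagonal]
  simp [sq]

lemma sigmaY_kronecker_sigmaY_isHermitian : (sigmaY ⊗ₖ sigmaY).IsHermitian := by
  have hσ : sigmaY.IsHermitian := by
    ext i j
    fin_cases i <;> fin_cases j <;> simp [sigmaY]
  rw [IsHermitian, conjTranspose_kronecker, hσ.eq]

lemma posSemidef_spinFlip {ρ : TwoQubitMat} (hρ : ρ.PosSemidef) : (spinFlip ρ).PosSemidef := by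
  have hconj : ρ.map (starRingEnd ℂ) = ρᵀ := by
    conv_lhs => rw [← hρ.1.eq]
    ext i j
    simp
  rw [spinFlip, hconj]
  simpa [sigmaY_kronecker_sigmaY_isHermitian.eq] using
    hρ.transpose.mul_mul_conjTranspose_same (sigmaY ⊗ₖ sigmaY)

section Rmat

variable {ρ : TwoQubitMat}

lemma posSemidef_matSqrt_mul_spinFlip_mul_matSqrt (hρ : ρ.PosSemidef) :
    (matSqrt ρ * spinFlip ρ * matSqrt ρ).PosSemidef := by
  simpa [(posSemidef_matSqrt hρ).1.eq] using
    (posSemidef_spinFlip hρ).mul_mul_conjTranspose_same (matSqrt ρ)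

lemma posSemidef_Rmat (hρ : ρ.PosSemidef) : (Rmat ρ).PosSemidef :=
  posSemidef_matSqrt (posSemidef_matSqrt_mul_spinFlip_mul_matSqrt hρ)

lemma Rmat_mul_self (hρ : ρ.PosSemidef) :
    Rmat ρ * Rmat ρ = matSqrt ρ * spinFlip ρ * matSqrt ρ :=
  matSqrt_mul_self (posSemidef_matSqrt_mul_spinFlip_mul_matSqrt hρ)

lemma rank_Rmat_le (hρ : ρ.PosSemidef) : (Rmat ρ).rank ≤ ρ.rank := by
  rw [← rank_conjTranspose_mul_self, (posSemidef_Rmat hρ).1.eq, Rmat_mul_self hρ,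
    ← rank_matSqrt hρ]
  exact (rank_mul_le_left _ _).trans (rank_mul_le_left _ _)

lemma trace_Rmat_mul_self (hρ : ρ.PosSemidef) :
    (Rmat ρ * Rmat ρ).trace = (ρ * spinFlip ρ).trace := by
  rw [Rmat_mul_self hρ, trace_mul_cycle, matSqrt_mul_self hρ]

end Rmat

lemma Multiset.exists_eq_pair_zero_zero {s : Multiset ℝ} (hcard : card s = 4)
    (hnonneg : ∀ x ∈ s, 0 ≤ x) (hsupp : card (s.filter (· ≠ 0)) ≤ 2) :
    ∃ a b : ℝ, a ≥ b ∧ b ≥ 0 ∧ s = {a, b, 0, 0} := by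
  obtain ⟨l, hl, hsorted, rfl⟩ : ∃ l : List ℝ, l.length = 4 ∧ l.Pairwise (· ≥ ·) ∧ s = l :=
    ⟨s.sort (· ≥ ·), by simp [hcard], s.pairwise_sort _, (s.sort_eq _).symm⟩
  match l, hl with
  | [a, b, c, d], _ =>
    simp only [List.pairwise_cons, List.mem_cons, forall_eq_or_imp, List.not_mem_nil,
      IsEmpty.forall_iff, forall_const, and_true, List.Pairwise.nil] at hsorted
    obtain ⟨⟨hab, hac, -⟩, ⟨hbc, -⟩, hcd⟩ := hsorted
    have hd : 0 ≤ d := hnonneg d (by simp)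
    have hc : c = 0 := by
      by_contra hc
      have hc_pos : 0 < c := lt_of_le_of_ne (hd.trans hcd) (Ne.symm hc)
      simp [hc, (hc_pos.trans_le hac).ne', (hc_pos.trans_le hbc).ne'] at hsupp
    obtain rfl : d = 0 := le_antisymm (hc ▸ hcd) hd
    subst hc
    exact ⟨a, b, hab, hbc, rfl⟩

section eigMultiset

variable {A : TwoQubitMat}

lemma eigMultiset_eq (hA : A.IsHermitian) : eigMultiset A = univ.val.map hA.eigenvalues := by
  rw [eigMultiset, dif_pos hA]

lemma card_eigMultiset (hA : A.IsHermitian) : Multiset.card (eigMultiset A) = 4 := by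
  simp [eigMultiset_eq hA]

lemma card_filter_ne_zero_eigMultiset (hA : A.IsHermitian) :
    Multiset.card ((eigMultiset A).filter (· ≠ 0)) = A.rank := by
  rw [eigMultiset_eq hA, hA.rank_eq_card_non_zero_eigs, Fintype.card_subtype, Multiset.filter_map]
  simp [Finset.card_def]

lemma sum_eigMultiset (hA : A.IsHermitian) : (eigMultiset A).sum = A.trace.re := by
  simp [eigMultiset_eq hA, hA.trace_eq_sum_eigenvalues]

lemma sum_map_sq_eigMultiset (hA : A.IsHermitian) :
    ((eigMultiset A).map (· ^ 2)).sum = (A * A).trace.re := by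
  simp [eigMultiset_eq hA, hA.trace_mul_self, ← Complex.ofReal_pow]

end eigMultiset

lemma Matrix.PosSemidef.nonneg_of_mem_eigMultiset {A : TwoQubitMat} (hA : A.PosSemidef) :
    ∀ x ∈ eigMultiset A, 0 ≤ x := by
  rw [eigMultiset_eq hA.1]
  exact Multiset.forall_mem_map_iff.mpr fun i _ => hA.eigenvalues_nonneg i

lemma exists_eigMultiset_Rmat_eq_of_rank_le_two {ρ : TwoQubitMat} (hρ : ρ.PosSemidef)
    (hrank : ρ.rank ≤ 2) :
    ∃ a b : ℝ, a ≥ b ∧ b ≥ 0 ∧ eigMultiset (Rmat ρ) = {a, b, 0, 0} ∧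
      CoA ρ ^ 2 - (ρ * spinFlip ρ).trace.re = 2 * (a * b) := by
  have hR := posSemidef_Rmat hρ
  obtain ⟨a, b, hab, hb, hspec⟩ := Multiset.exists_eq_pair_zero_zero (card_eigMultiset hR.1)
    hR.nonneg_of_mem_eigMultiset
    ((card_filter_ne_zero_eigMultiset hR.1).trans_le ((rank_Rmat_le hρ).trans hrank))
  refine ⟨a, b, hab, hb, hspec, ?_⟩
  have hsum : CoA ρ = a + b := by
    rw [CoA, ← sum_eigMultiset hR.1, hspec]
    simp
  have hsq : (ρ * spinFlip ρ).trace.re = a ^ 2 + b ^ 2 := by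
    rw [← trace_Rmat_mul_self hρ, ← sum_map_sq_eigMultiset hR.1, hspec]
    simp
  rw [hsum, hsq]
  ring

lemma exists_eigMultiset_Rmat_eq_of_eq_mul_conjTranspose {ρ : TwoQubitMat}
    {M : Matrix (Fin 2 × Fin 2) (Fin 2) ℂ} (hM : ρ = M * Mᴴ) :
    ∃ a b : ℝ, a ≥ b ∧ b ≥ 0 ∧ eigMultiset (Rmat ρ) = {a, b, 0, 0} ∧
      CoA ρ ^ 2 - (ρ * spinFlip ρ).trace.re = 2 * (a * b) := by
  subst hM
  refine exists_eigMultiset_Rmat_eq_of_rank_le_two (posSemidef_self_mul_conjTranspose M) ?_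
  simpa [rank_self_mul_conjTranspose] using rank_le_card_width M

lemma rhoAB_eq_mul_conjTranspose (ψ : Fin 2 → Fin 2 → Fin 2 → ℂ) :
    rhoAB ψ = of (fun p l => ψ p.1 p.2 l) * (of fun p l => ψ p.1 p.2 l)ᴴ := by
  ext p q
  simp [rhoAB, mul_apply]

lemma rhoAS_eq_mul_conjTranspose (ψ : Fin 2 → Fin 2 → Fin 2 → ℂ) :
    rhoAS ψ = of (fun p j => ψ p.1 j p.2) * (of fun p j => ψ p.1 j p.2)ᴴ := by
  ext p q
  simp [rhoAS, mul_apply]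

lemma spinFlip_apply (ρ : TwoQubitMat) (p q : Fin 2 × Fin 2) :
    spinFlip ρ p q = (-1) ^ (p.1.val + p.2.val + q.1.val + q.2.val) *
      starRingEnd ℂ (ρ (p.1.rev, p.2.rev) (q.1.rev, q.2.rev)) := by
  obtain ⟨p1, p2⟩ := p
  obtain ⟨q1, q2⟩ := q
  fin_cases p1 <;> fin_cases p2 <;> fin_cases q1 <;> fin_cases q2 <;>
    norm_num [spinFlip, mul_apply, sigmaY, Fintype.sum_prod_type, Fin.sum_univ_two, Fin.rev]

lemma trace_rhoAB_mul_spinFlip_add_trace_rhoAS_mul_spinFlip (ψ : Fin 2 → Fin 2 → Fin 2 → ℂ) :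
    (rhoAB ψ * spinFlip (rhoAB ψ)).trace + (rhoAS ψ * spinFlip (rhoAS ψ)).trace
      = 4 * (rhoA ψ).det := by
  simp only [Matrix.trace, Matrix.diag, mul_apply, spinFlip_apply, rhoAB, rhoAS, rhoA,
    det_fin_two, Fintype.sum_prod_type, Fin.sum_univ_two]
  norm_num [Fin.rev]
  ring

theorem CoA_eigenvalue_identity_general (ψ : Fin 2 → Fin 2 → Fin 2 → ℂ) :
    ∃ lAB₁ lAB₂ lAS₁ lAS₂ : ℝ,
      lAB₁ ≥ lAB₂ ∧ lAB₂ ≥ 0 ∧ lAS₁ ≥ lAS₂ ∧ lAS₂ ≥ 0 ∧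
      eigMultiset (Rmat (rhoAB ψ)) = {lAB₁, lAB₂, 0, 0} ∧
      eigMultiset (Rmat (rhoAS ψ)) = {lAS₁, lAS₂, 0, 0} ∧
      CoA (rhoAB ψ) ^ 2 + CoA (rhoAS ψ) ^ 2 - 4 * (rhoA ψ).det.re =
        2 * (lAB₁ * lAB₂ + lAS₁ * lAS₂) := by
  obtain ⟨a, b, hab, hb, hspecAB, hAB⟩ :=
    exists_eigMultiset_Rmat_eq_of_eq_mul_conjTranspose (rhoAB_eq_mul_conjTranspose ψ)
  obtain ⟨c, d, hcd, hd, hspecAS, hAS⟩ :=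
    exists_eigMultiset_Rmat_eq_of_eq_mul_conjTranspose (rhoAS_eq_mul_conjTranspose ψ)
  have htrace := congrArg Complex.re (trace_rhoAB_mul_spinFlip_add_trace_rhoAS_mul_spinFlip ψ)
  simp only [add_re, mul_re, re_ofNat, im_ofNat, zero_mul, sub_zero] at htrace
  exact ⟨a, b, c, d, hab, hb, hcd, hd, hspecAB, hspecAS, by linarith⟩

theorem CoA_eigenvalue_identity (ψ : Fin 2 → Fin 2 → Fin 2 → ℂ)
    (hψ : ∑ i, ∑ j, ∑ l, Complex.normSq (ψ i j l) = 1) :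
    ∃ lAB₁ lAB₂ lAS₁ lAS₂ : ℝ,
      lAB₁ ≥ lAB₂ ∧ lAB₂ ≥ 0 ∧ lAS₁ ≥ lAS₂ ∧ lAS₂ ≥ 0 ∧
      eigMultiset (Rmat (rhoAB ψ)) = {lAB₁, lAB₂, 0, 0} ∧
      eigMultiset (Rmat (rhoAS ψ)) = {lAS₁, lAS₂, 0, 0} ∧
      CoA (rhoAB ψ) ^ 2 + CoA (rhoAS ψ) ^ 2 - 4 * (rhoA ψ).det.re =
        2 * (lAB₁ * lAB₂ + lAS₁ * lAS₂) :=
  CoA_eigenvalue_identity_general ψ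
end
end

section
/- Let a, b, c be nonnegative reals with a + b + c = 1 and let ψ be the W-class three-qubit state ψ = √a·|100⟩ + √b·|010⟩ + √c·|001⟩ (i.e. ψ 1 0 0 = √a, ψ 0 1 0 = √b, ψ 0 0 1 = √c, all other amplitudes zero). Then the concurrence of assistance with respect to the party holding the third qubit is Tr R(ρ_AB) = 2√(a·b), and the concurrence of assistance with respect to the party holding the first qubit is Tr R(ρ_BS) = 2√(b·c), where ρ_AB is the reduced state of qubits 1,2 and ρ_BS is the reduced state of qubits 2,3. -/
open Matrix Complex Kronecker Finset
open scoped ComplexOrder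

noncomputable section

def rhoBS (ψ : Fin 2 → Fin 2 → Fin 2 → ℂ) : TwoQubitMat :=
  fun p q => ∑ i, ψ i p.1 p.2 * (starRingEnd ℂ) (ψ i q.1 q.2)

/-- The W-class state `√a|100⟩ + √b|010⟩ + √c|001⟩`. -/
def psiW (a b c : ℝ) : Fin 2 → Fin 2 → Fin 2 → ℂ := fun i j l =>
  if i = 1 ∧ j = 0 ∧ l = 0 then (Real.sqrt a : ℂ)
  else if i = 0 ∧ j = 1 ∧ l = 0 then (Real.sqrt b : ℂ)
  else if i = 0 ∧ j = 0 ∧ l = 1 then (Real.sqrt c : ℂ)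
  else 0

/-!
Both reduced states have the form `ρ = |φ⟩⟨φ| + |v⟩⟨v|` with `φ = z|00⟩` and
`v = x|10⟩ + y|01⟩`, and the spin flip sends `φ` to a multiple of `|11⟩` and `v` to
`ṽ = ȳ|10⟩ + x̄|01⟩`. Since `φ ⊥ v`, `√ρ = |φ⟩⟨φ|/‖φ‖ + |v⟩⟨v|/‖v‖`, and by orthogonality every
term of `√ρ ρ̃ √ρ` vanishes except `|⟨v|ṽ⟩|²/‖v‖² · |v⟩⟨v|`. Hence `R(ρ)` is a multiple of
`|v⟩⟨v|` with trace `|⟨v|ṽ⟩| = 2|xy|`.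
-/

open scoped MatrixOrder in
theorem matSqrt_eq_of_mul_self {m : Type*} [Fintype m] [DecidableEq m] {M Q : Matrix m m ℂ}
    (hM : M.PosSemidef) (hQ : Q.PosSemidef) (h : Q * Q = M) : matSqrt M = Q := by
  have hcfc : matSqrt M = CFC.sqrt M := by
    rw [matSqrt, dif_pos hM, CFC.sqrt_eq_real_sqrt M hM.nonneg, cfcₙ_eq_cfc, hM.1.cfc_eq]
    simp [IsHermitian.cfc]
  rwa [hcfc, CFC.sqrt_eq_iff M Q hM.nonneg hQ.nonneg]

section KetBra

variable {n : Type*} [Fintype n]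

def ketBra (v : n → ℂ) : Matrix n n ℂ := vecMulVec v (star v)

local notation "‖" v "‖₂" => ‖WithLp.toLp 2 v‖

theorem posSemidef_ketBra (v : n → ℂ) : (ketBra v).PosSemidef :=
  posSemidef_vecMulVec_self_star v

theorem star_dotProduct_self_eq_norm_sq (v : n → ℂ) : star v ⬝ᵥ v = ((‖v‖₂ ^ 2 : ℝ) : ℂ) := by
  rw [dotProduct_comm, ← EuclideanSpace.inner_toLp_toLp, inner_self_eq_norm_sq_to_K]
  push_cast
  rfl

theorem trace_ketBra (v : n → ℂ) : (ketBra v).trace = ((‖v‖₂ ^ 2 : ℝ) : ℂ) := by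
  rw [ketBra, trace_vecMulVec, dotProduct_comm, star_dotProduct_self_eq_norm_sq]

theorem ketBra_mul_ketBra (u v : n → ℂ) :
    ketBra u * ketBra v = (star u ⬝ᵥ v) • vecMulVec u (star v) := by
  rw [ketBra, ketBra, vecMulVec_mul_vecMulVec, vecMulVec_smul]

theorem ketBra_mul_ketBra_of_orthogonal {u v : n → ℂ} (h : star u ⬝ᵥ v = 0) :
    ketBra u * ketBra v = 0 := by
  rw [ketBra_mul_ketBra, h, zero_smul]

theorem ketBra_mul_ketBra_self (v : n → ℂ) : ketBra v * ketBra v = (‖v‖₂ ^ 2) • ketBra v := by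
  rw [ketBra_mul_ketBra, star_dotProduct_self_eq_norm_sq, Complex.coe_smul, ketBra]

theorem ketBra_mul_ketBra_mul_ketBra (v w : n → ℂ) :
    ketBra v * ketBra w * ketBra v = ‖star v ⬝ᵥ w‖ ^ 2 • ketBra v := by
  rw [ketBra_mul_ketBra, Matrix.smul_mul, ketBra, vecMulVec_mul_vecMulVec, vecMulVec_smul,
    smul_smul, star_dotProduct w, Complex.star_def, Complex.mul_conj', ← Complex.ofReal_pow,
    Complex.coe_smul]

theorem sandwich_ketBra_add_ketBra {φ v φ' v' : n → ℂ} (hφφ' : star φ ⬝ᵥ φ' = 0)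
    (hφv' : star φ ⬝ᵥ v' = 0) (hvφ' : star v ⬝ᵥ φ' = 0) (a b : ℝ) :
    (a • ketBra φ + b • ketBra v) * (ketBra φ' + ketBra v') * (a • ketBra φ + b • ketBra v) =
      (b * ‖star v ⬝ᵥ v'‖) ^ 2 • ketBra v := by
  have hv'φ : star v' ⬝ᵥ φ = 0 := by rw [star_dotProduct, hφv', star_zero]
  have hleft : (a • ketBra φ + b • ketBra v) * (ketBra φ' + ketBra v') =
      b • (ketBra v * ketBra v') := by
    simp only [add_mul, mul_add, Matrix.smul_mul, ketBra_mul_ketBra_of_orthogonal hφφ',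
      ketBra_mul_ketBra_of_orthogonal hφv', ketBra_mul_ketBra_of_orthogonal hvφ', smul_zero,
      zero_add]
  rw [hleft, Matrix.smul_mul, mul_add, Matrix.mul_smul, Matrix.mul_smul, Matrix.mul_assoc,
    ketBra_mul_ketBra_of_orthogonal hv'φ, Matrix.mul_zero, smul_zero, zero_add,
    ketBra_mul_ketBra_mul_ketBra, smul_smul, smul_smul]
  congr 1
  ring

theorem smul_ketBra_mul_self {s : ℝ} (hs : 0 ≤ s) (v : n → ℂ) :
    ((√s / ‖v‖₂) • ketBra v) * ((√s / ‖v‖₂) • ketBra v) = s • ketBra v := by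
  rw [Matrix.smul_mul, Matrix.mul_smul, ketBra_mul_ketBra_self, smul_smul, smul_smul]
  rcases eq_or_ne v 0 with rfl | hv
  · simp [ketBra]
  · have : ‖v‖₂ ≠ 0 := by simpa using hv
    congr 1
    field_simp
    rw [Real.sq_sqrt hs]

variable [DecidableEq n]

theorem matSqrt_smul_ketBra {s : ℝ} (hs : 0 ≤ s) (v : n → ℂ) :
    matSqrt (s • ketBra v) = (√s / ‖v‖₂) • ketBra v :=
  matSqrt_eq_of_mul_self ((posSemidef_ketBra v).smul hs)
    ((posSemidef_ketBra v).smul (by positivity)) (smul_ketBra_mul_self hs v)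

theorem matSqrt_ketBra_add_ketBra {u v : n → ℂ} (h : star u ⬝ᵥ v = 0) :
    matSqrt (ketBra u + ketBra v) = ‖u‖₂⁻¹ • ketBra u + ‖v‖₂⁻¹ • ketBra v := by
  have h' : star v ⬝ᵥ u = 0 := by rw [star_dotProduct, h, star_zero]
  have hsq (w : n → ℂ) : (‖w‖₂⁻¹ • ketBra w) * (‖w‖₂⁻¹ • ketBra w) = ketBra w := by
    simpa using smul_ketBra_mul_self zero_le_one w
  refine matSqrt_eq_of_mul_self ((posSemidef_ketBra u).add (posSemidef_ketBra v))
    (((posSemidef_ketBra u).smul (by positivity)).add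
      ((posSemidef_ketBra v).smul (by positivity))) ?_
  simp only [add_mul, mul_add, hsq, Matrix.smul_mul, Matrix.mul_smul,
    ketBra_mul_ketBra_of_orthogonal h, ketBra_mul_ketBra_of_orthogonal h', smul_zero, add_zero,
    zero_add]

theorem trace_matSqrt_sandwich_ketBra_add_ketBra {φ v φ' v' : n → ℂ} (hφv : star φ ⬝ᵥ v = 0)
    (hφφ' : star φ ⬝ᵥ φ' = 0) (hφv' : star φ ⬝ᵥ v' = 0) (hvφ' : star v ⬝ᵥ φ' = 0) :
    (matSqrt (matSqrt (ketBra φ + ketBra v) * (ketBra φ' + ketBra v') *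
      matSqrt (ketBra φ + ketBra v))).trace = ‖star v ⬝ᵥ v'‖ := by
  rw [matSqrt_ketBra_add_ketBra hφv, sandwich_ketBra_add_ketBra hφφ' hφv' hvφ',
    matSqrt_smul_ketBra (sq_nonneg _), Real.sqrt_sq (by positivity), trace_smul, trace_ketBra]
  rcases eq_or_ne v 0 with rfl | hv
  · simp
  · have : ‖v‖₂ ≠ 0 := by simpa using hv
    rw [Complex.real_smul]
    push_cast
    field_simp

end KetBra

theorem conjTranspose_sigmaY : sigmaYᴴ = sigmaY := by
  ext i j
  fin_cases i <;> fin_cases j <;> simp [sigmaY]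

def spinFlipVec (v : Fin 2 × Fin 2 → ℂ) : Fin 2 × Fin 2 → ℂ := (sigmaY ⊗ₖ sigmaY) *ᵥ star v

theorem spinFlip_add (ρ σ : TwoQubitMat) : spinFlip (ρ + σ) = spinFlip ρ + spinFlip σ := by
  simp only [spinFlip, Matrix.map_add _ (map_add _), Matrix.mul_add, Matrix.add_mul]

theorem spinFlip_ketBra (v : Fin 2 × Fin 2 → ℂ) :
    spinFlip (ketBra v) = ketBra (spinFlipVec v) := by
  have hY : (sigmaY ⊗ₖ sigmaY)ᴴ = sigmaY ⊗ₖ sigmaY := by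
    rw [conjTranspose_kronecker, conjTranspose_sigmaY]
  have hconj : (vecMulVec v (star v)).map (starRingEnd ℂ) = vecMulVec (star v) v := by
    ext i j
    simp [vecMulVec_apply]
  rw [spinFlip, ketBra, spinFlipVec, ketBra, star_mulVec, hY, star_star, hconj, mul_vecMulVec,
    vecMulVec_mul]

theorem CoA_ketBra_add_ketBra {φ v : Fin 2 × Fin 2 → ℂ} (hφv : star φ ⬝ᵥ v = 0)
    (hφφ' : star φ ⬝ᵥ spinFlipVec φ = 0) (hφv' : star φ ⬝ᵥ spinFlipVec v = 0)
    (hvφ' : star v ⬝ᵥ spinFlipVec φ = 0) :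
    CoA (ketBra φ + ketBra v) = ‖star v ⬝ᵥ spinFlipVec v‖ := by
  rw [CoA, Rmat, spinFlip_add, spinFlip_ketBra, spinFlip_ketBra,
    trace_matSqrt_sandwich_ketBra_add_ketBra hφv hφφ' hφv' hvφ', Complex.ofReal_re]

theorem spinFlipVec_single_zero_zero (z : ℂ) :
    spinFlipVec (Pi.single (0, 0) z) = -Pi.single (1, 1) (star z) := by
  ext ⟨i, j⟩
  fin_cases i <;> fin_cases j <;>
    simp [spinFlipVec, sigmaY, mulVec, dotProduct, Fintype.sum_prod_type, Pi.single_apply]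

theorem spinFlipVec_single_one_zero_add_single_zero_one (x y : ℂ) :
    spinFlipVec (Pi.single (1, 0) x + Pi.single (0, 1) y) =
      Pi.single (1, 0) (star y) + Pi.single (0, 1) (star x) := by
  ext ⟨i, j⟩
  fin_cases i <;> fin_cases j <;>
    simp [spinFlipVec, sigmaY, mulVec, dotProduct, Fintype.sum_prod_type, Pi.single_apply]

theorem CoA_ketBra_single_add_ketBra_single_add_single (x y z : ℂ) :
    CoA (ketBra (Pi.single (0, 0) z) + ketBra (Pi.single (1, 0) x + Pi.single (0, 1) y)) =
      2 * ‖x * y‖ := by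
  have hv : star (Pi.single (1, 0) x + Pi.single (0, 1) y) ⬝ᵥ
      spinFlipVec (Pi.single (1, 0) x + Pi.single (0, 1) y) = 2 * star (x * y) := by
    rw [spinFlipVec_single_one_zero_add_single_zero_one]
    simp [dotProduct, Fintype.sum_prod_type, Pi.single_apply, two_mul, mul_comm]
  rw [CoA_ketBra_add_ketBra, hv, norm_mul, norm_star, Complex.norm_two]
  all_goals simp [spinFlipVec_single_zero_zero, spinFlipVec_single_one_zero_add_single_zero_one,
    dotProduct, Fintype.sum_prod_type, Pi.single_apply]

theorem rhoAB_eq_sum_ketBra (ψ : Fin 2 → Fin 2 → Fin 2 → ℂ) :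
    rhoAB ψ = ∑ l, ketBra (fun p => ψ p.1 p.2 l) := by
  ext p q
  simp [rhoAB, ketBra, Matrix.sum_apply, vecMulVec_apply]

theorem rhoBS_eq_sum_ketBra (ψ : Fin 2 → Fin 2 → Fin 2 → ℂ) :
    rhoBS ψ = ∑ i, ketBra (fun p => ψ i p.1 p.2) := by
  ext p q
  simp [rhoBS, ketBra, Matrix.sum_apply, vecMulVec_apply]

theorem rhoAB_psiW (a b c : ℝ) :
    rhoAB (psiW a b c) = ketBra (Pi.single (0, 0) (√c : ℂ)) +
      ketBra (Pi.single (1, 0) (√a : ℂ) + Pi.single (0, 1) (√b : ℂ)) := by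
  rw [rhoAB_eq_sum_ketBra, Fin.sum_univ_two, add_comm]
  congr 2 <;> ext ⟨i, j⟩ <;> fin_cases i <;> fin_cases j <;> simp [psiW]

theorem rhoBS_psiW (a b c : ℝ) :
    rhoBS (psiW a b c) = ketBra (Pi.single (0, 0) (√a : ℂ)) +
      ketBra (Pi.single (1, 0) (√b : ℂ) + Pi.single (0, 1) (√c : ℂ)) := by
  rw [rhoBS_eq_sum_ketBra, Fin.sum_univ_two, add_comm]
  congr 2 <;> ext ⟨i, j⟩ <;> fin_cases i <;> fin_cases j <;> simp [psiW]

theorem CoA_of_W_state_general (a b c : ℝ) (ha : 0 ≤ a) (hb : 0 ≤ b) :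
    CoA (rhoAB (psiW a b c)) = 2 * Real.sqrt (a * b) ∧
    CoA (rhoBS (psiW a b c)) = 2 * Real.sqrt (b * c) := by
  simp [rhoAB_psiW, rhoBS_psiW, CoA_ketBra_single_add_ketBra_single_add_single,
    Real.sqrt_mul ha, Real.sqrt_mul hb, abs_of_nonneg, Real.sqrt_nonneg]

theorem CoA_of_W_state (a b c : ℝ) (ha : 0 ≤ a) (hb : 0 ≤ b) (hc : 0 ≤ c)
    (habc : a + b + c = 1) :
    CoA (rhoAB (psiW a b c)) = 2 * Real.sqrt (a * b) ∧
    CoA (rhoBS (psiW a b c)) = 2 * Real.sqrt (b * c) :=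
  CoA_of_W_state_general a b c ha hb
end
end
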